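/- arXiv:2110.12709 — 4 statements merged into one kernel-verified Lean document; each statement's English description precedes it below -/
import Mathlib

section
/- Let S be a finite set of real numbers, let f : ℝ → ℝ, and let L be a natural number with L ≥ |S|. Then ∑_{n=1}^{L} ((-1)^{n-1}/(n-1)!) · (∑ over injective tuples t : Fin n → S of f(t 0)) equals f(x) if S = {x} is a singleton, and equals 0 if |S| ≠ 1. Consequently, as L → ∞ the partial sums converge (are eventually constant) to f applied to the unique element of S if |S| = 1, and to 0 otherwise. -/
open Function Finset

lemma card_inj_subtype {β : Type*} [Fintype β] [DecidableEq β] (m : ℕ) :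
    Fintype.card {s : Fin m → β // Injective s} = (Fintype.card β).descFactorial m := by
  rw [Fintype.card_congr (Equiv.subtypeInjectiveEquivEmbedding (Fin m) β),
    Fintype.card_embedding_eq, Fintype.card_fin]

open scoped Classical in
noncomputable def injSigmaEquiv {α : Type*} [Fintype α] (m : ℕ) :
    {t : Fin (m+1) → α // Injective t} ≃
      Σ x : α, {s : Fin m → {y : α // y ≠ x} // Injective s} where
  toFun t := ⟨t.1 0, fun i => ⟨t.1 i.succ, fun h => Fin.succ_ne_zero i (t.2 h)⟩,
    fun i j h => Fin.succ_injective _ (t.2 (congrArg Subtype.val h))⟩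
  invFun p := ⟨Fin.cons p.1 (fun i => (p.2.1 i : α)), by
    intro i j h
    induction i using Fin.cases with
    | zero =>
      induction j using Fin.cases with
      | zero => rfl
      | succ j =>
        simp only [Fin.cons_zero, Fin.cons_succ] at h
        exact absurd h.symm (p.2.1 j).2
    | succ i =>
      induction j using Fin.cases with
      | zero =>
        simp only [Fin.cons_zero, Fin.cons_succ] at h
        exact absurd h (p.2.1 i).2
      | succ j =>
        simp only [Fin.cons_succ] at h
        rw [p.2.2 (Subtype.ext h)]⟩
  left_inv t := by
    apply Subtype.ext
    funext i
    induction i using Fin.cases with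
    | zero => simp
    | succ i => simp
  right_inv p := by
    refine Sigma.ext rfl (heq_of_eq ?_)
    apply Subtype.ext
    funext i
    apply Subtype.ext
    simp

open scoped Classical in
lemma mycomp_inner_sum (S : Finset ℝ) (f : ℝ → ℝ) (m : ℕ) :
    ∑ t ∈ Finset.univ.filter (fun t : Fin (m + 1) → S => Function.Injective t),
        f (t 0 : ℝ) = (∑ x ∈ S, f x) * ((S.card - 1).descFactorial m : ℝ) := by
  rw [Finset.sum_subtype (p := fun t : Fin (m+1) → S => Injective t)
    (Finset.univ.filter (fun t : Fin (m + 1) → S => Function.Injective t))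
    (by simp) (fun t : Fin (m+1) → S => f (t 0 : ℝ))]
  have he := Fintype.sum_equiv (injSigmaEquiv (α := S) m)
      (fun t : {t : Fin (m+1) → S // Injective t} => f ((t : Fin (m+1) → S) 0 : ℝ))
      (fun p => f (p.1 : ℝ)) (fun t => rfl)
  rw [he]
  rw [← Finset.univ_sigma_univ, Finset.sum_sigma]
  have hcard : ∀ x : S,
      Fintype.card {s : Fin m → {y : S // y ≠ x} // Injective s}
        = (S.card - 1).descFactorial m := by
    intro x
    rw [card_inj_subtype]
    congr 1
    rw [Fintype.card_subtype_compl, Fintype.card_subtype_eq, Fintype.card_coe]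
  have : ∀ x : S, ∑ _s : {s : Fin m → {y : S // y ≠ x} // Injective s}, f (x : ℝ)
      = f (x : ℝ) * ((S.card - 1).descFactorial m : ℝ) := by
    intro x
    rw [Finset.sum_const, Finset.card_univ, hcard x, nsmul_eq_mul, mul_comm]
  rw [Finset.sum_congr rfl (fun x _ => this x), ← Finset.sum_mul, Finset.sum_coe_sort]

open scoped Classical in
/-- Finite-set form of the single-event compensation scheme: for a finite `S ⊆ ℝ`,
`f : ℝ → ℝ` and `L ≥ |S|`, the alternating sum
`∑_{n=1}^{L} ((-1)^{n-1}/(n-1)!) ∑_{t : Fin n ↪ S} f (t 0)`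
(written below with `n = m + 1`, `m` ranging over `0, …, L-1`) equals `f x` if `S = {x}`
and `0` if `|S| ≠ 1`. -/
theorem stmt_1 (S : Finset ℝ) (f : ℝ → ℝ) (L : ℕ) (hL : S.card ≤ L) :
    (∀ x : ℝ, S = {x} →
      ∑ m ∈ Finset.range L, ((-1 : ℝ) ^ m / (m.factorial : ℝ)) *
        ∑ t ∈ Finset.univ.filter (fun t : Fin (m + 1) → S => Function.Injective t),
          f (t 0 : ℝ) = f x) ∧
    (S.card ≠ 1 →
      ∑ m ∈ Finset.range L, ((-1 : ℝ) ^ m / (m.factorial : ℝ)) *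
        ∑ t ∈ Finset.univ.filter (fun t : Fin (m + 1) → S => Function.Injective t),
          f (t 0 : ℝ) = 0) := by
  have key : ∑ m ∈ Finset.range L, ((-1 : ℝ) ^ m / (m.factorial : ℝ)) *
        ∑ t ∈ Finset.univ.filter (fun t : Fin (m + 1) → S => Function.Injective t),
          f (t 0 : ℝ)
      = (∑ x ∈ S, f x) * ∑ m ∈ Finset.range L,
          (-1 : ℝ) ^ m * ((S.card - 1).choose m : ℝ) := by
    rw [Finset.mul_sum]
    refine Finset.sum_congr rfl fun m _ => ?_
    rw [mycomp_inner_sum S f m, Nat.descFactorial_eq_factorial_mul_choose]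
    push_cast
    have h0 : (m.factorial : ℝ) ≠ 0 := Nat.cast_ne_zero.mpr m.factorial_ne_zero
    field_simp
  have hch : ∀ n : ℕ, n < L → ∑ m ∈ Finset.range L,
      (-1 : ℝ) ^ m * ((n : ℕ).choose m : ℝ) = if n = 0 then 1 else 0 := by
    intro n hn
    have hsub : ∑ m ∈ Finset.range L, (-1 : ℝ) ^ m * (n.choose m : ℝ)
        = ∑ m ∈ Finset.range (n + 1), (-1 : ℝ) ^ m * (n.choose m : ℝ) := by
      refine (Finset.sum_subset (Finset.range_subset_range.2 hn) fun m _ hm => ?_).symm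
      rw [Finset.mem_range, not_lt] at hm
      rw [Nat.choose_eq_zero_of_lt (by omega)]
      simp
    rw [hsub]
    have h := Int.alternating_sum_range_choose (n := n)
    have h2 := congrArg (fun z : ℤ => (z : ℝ)) h
    push_cast at h2
    rw [h2]
  constructor
  · rintro x rfl
    have hL1 : 0 < L := by simp at hL; omega
    have hc : ({x} : Finset ℝ).card - 1 = 0 := by simp
    rw [key, hc, hch 0 hL1, if_pos rfl]
    simp
  · intro hcard
    rw [key]
    rcases Nat.eq_zero_or_pos S.card with h0 | hpos
    · rw [Finset.card_eq_zero.mp h0]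
      simp
    · have h2 : 2 ≤ S.card := by omega
      rw [hch (S.card - 1) (by omega), if_neg (by omega)]
      ring
end

section
/- Let S be a finite set of real numbers, let M ≥ 1, let f : ℝ^M → ℝ, and let L be a natural number with L ≥ max(M, |S|). Then ∑_{n=M}^{L} ((-1)^{n-M}/(n-M)!) · (∑ over injective tuples t : Fin n → S with t 0 < t 1 < ⋯ < t (M-1) of f(t 0,…,t (M-1))) equals f(s_1,…,s_M) if |S| = M, where s_1 < s_2 < ⋯ < s_M is the increasing enumeration of S, and equals 0 if |S| ≠ M. -/
open scoped Classical in
private lemma fiber_card_aux {S : Finset ℝ} {M m : ℕ} (g : Fin M → S)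
    (hg : Function.Injective g) :
    (Finset.univ.filter (fun t : Fin (M + m) → S =>
        Function.Injective t ∧ ∀ i : Fin M, t (Fin.castLE (Nat.le_add_right M m) i) = g i)).card
      = (S.card - M).descFactorial m := by
  have hcases : ∀ a : Fin (M + m),
      (∃ i : Fin M, a = Fin.castAdd m i) ∨ ∃ j : Fin m, a = Fin.natAdd M j := fun a =>
    Fin.addCases (fun i => Or.inl ⟨i, rfl⟩) (fun j => Or.inr ⟨j, rfl⟩) a
  have hne : ∀ (i : Fin M) (j : Fin m), Fin.castAdd m i ≠ Fin.natAdd M j := by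
    intro i j h
    have := congrArg Fin.val h
    simp only [Fin.coe_castAdd, Fin.coe_natAdd] at this
    omega
  have hcast : ∀ i : Fin M, Fin.castLE (Nat.le_add_right M m) i = Fin.castAdd m i :=
    fun i => rfl
  rw [← Fintype.card_subtype]
  have e : {t : Fin (M + m) → S //
      Function.Injective t ∧ ∀ i : Fin M, t (Fin.castLE (Nat.le_add_right M m) i) = g i}
      ≃ (Fin m ↪ {x : S // x ∉ Set.range g}) := by
    refine
      { toFun := fun t => ⟨fun j => ⟨t.1 (Fin.natAdd M j), ?_⟩, ?_⟩
        invFun := fun e => ⟨Fin.append g (fun j => (e j).1), ?_, ?_⟩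
        left_inv := ?_
        right_inv := ?_ }
    · rintro ⟨i, hi⟩
      have h0 : t.1 (Fin.castAdd m i) = t.1 (Fin.natAdd M j) := by
        rw [← hcast, t.2.2 i]; exact hi
      exact hne i j (t.2.1 h0)
    · intro j₁ j₂ h
      have h0 : t.1 (Fin.natAdd M j₁) = t.1 (Fin.natAdd M j₂) := congrArg Subtype.val h
      have h1 := congrArg Fin.val (t.2.1 h0)
      simp only [Fin.coe_natAdd] at h1
      exact Fin.ext (by omega)
    · -- injectivity of append
      intro a b hab
      rcases hcases a with ⟨i₁, rfl⟩ | ⟨j₁, rfl⟩ <;> rcases hcases b with ⟨i₂, rfl⟩ | ⟨j₂, rfl⟩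
      · rw [Fin.append_left, Fin.append_left] at hab
        exact congrArg _ (hg hab)
      · rw [Fin.append_left, Fin.append_right] at hab
        exact ((e j₂).2 ⟨i₁, hab⟩).elim
      · rw [Fin.append_right, Fin.append_left] at hab
        exact ((e j₁).2 ⟨i₂, hab.symm⟩).elim
      · rw [Fin.append_right, Fin.append_right] at hab
        exact congrArg _ (e.injective (Subtype.ext hab))
    · intro i
      rw [hcast, Fin.append_left]
    · intro t
      ext a
      rcases hcases a with ⟨i, rfl⟩ | ⟨j, rfl⟩
      · simp only [Fin.append_left]
        exact congrArg Subtype.val (t.2.2 i).symm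
      · simp only [Fin.append_right]
        rfl
    · intro e
      ext j
      simp [Fin.append_right]
  rw [Fintype.card_congr e, Fintype.card_embedding_eq, Fintype.card_fin]
  congr 1
  rw [Fintype.card_subtype_compl]
  have h1 : Fintype.card {x : S // x ∈ Set.range g} = M := by
    have h := Set.card_range_of_injective hg
    rw [Fintype.card_fin] at h
    exact (Fintype.card_congr (Equiv.refl _)).trans h
  have h2 : Fintype.card S = S.card := Fintype.card_coe S
  rw [h1, h2]

open scoped Classical in
private lemma inner_sum_eq (S : Finset ℝ) (M m : ℕ) (f : (Fin M → ℝ) → ℝ) :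
    ∑ t ∈ Finset.univ.filter (fun t : Fin (M + m) → S =>
        Function.Injective t ∧
          StrictMono fun i : Fin M => (t (Fin.castLE (Nat.le_add_right M m) i) : ℝ)),
      f (fun i => (t (Fin.castLE (Nat.le_add_right M m) i) : ℝ))
    = ((S.card - M).descFactorial m : ℝ) *
      ∑ g ∈ Finset.univ.filter (fun g : Fin M → S => StrictMono fun i => ((g i : ℝ))),
        f (fun i => (g i : ℝ)) := by
  set T := Finset.univ.filter (fun t : Fin (M + m) → S =>
        Function.Injective t ∧
          StrictMono fun i : Fin M => (t (Fin.castLE (Nat.le_add_right M m) i) : ℝ)) with hT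
  set G := Finset.univ.filter (fun g : Fin M → S => StrictMono fun i => ((g i : ℝ))) with hG
  have hmaps : ∀ t ∈ T, (fun i : Fin M => t (Fin.castLE (Nat.le_add_right M m) i)) ∈ G := by
    intro t ht
    simp only [hT, Finset.mem_filter] at ht
    simp only [hG, Finset.mem_filter, Finset.mem_univ, true_and]
    exact ht.2.2
  rw [← Finset.sum_fiberwise_of_maps_to' hmaps (fun g => f (fun i => (g i : ℝ)))]
  rw [Finset.mul_sum]
  refine Finset.sum_congr rfl (fun g hg => ?_)
  have hgsm : StrictMono fun i => ((g i : ℝ)) := by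
    simpa [hG, Finset.mem_filter] using hg
  have hginj : Function.Injective g := fun a b hab => hgsm.injective (by rw [hab])
  have hfilter : (T.filter fun t => (fun i : Fin M =>
      t (Fin.castLE (Nat.le_add_right M m) i)) = g) =
      Finset.univ.filter (fun t : Fin (M + m) → S =>
        Function.Injective t ∧
          ∀ i : Fin M, t (Fin.castLE (Nat.le_add_right M m) i) = g i) := by
    ext t
    simp only [hT, Finset.filter_filter, Finset.mem_filter, Finset.mem_univ, true_and]
    constructor
    · rintro ⟨⟨hinj, _⟩, hres⟩
      exact ⟨hinj, fun i => congrFun hres i⟩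
    · rintro ⟨hinj, hres⟩
      refine ⟨⟨hinj, ?_⟩, funext hres⟩
      have : (fun i : Fin M => (t (Fin.castLE (Nat.le_add_right M m) i) : ℝ)) =
          fun i => ((g i : ℝ)) := by
        ext i; rw [hres i]
      rw [this]; exact hgsm
  rw [hfilter, Finset.sum_const, nsmul_eq_mul, fiber_card_aux g hginj]

open scoped Classical in
private lemma G_eq_singleton {S : Finset ℝ} {M : ℕ} (hK : S.card = M) :
    Finset.univ.filter (fun g : Fin M → S => StrictMono fun i => ((g i : ℝ))) =
      {fun i => S.orderIsoOfFin hK i} := by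
  ext g
  simp only [Finset.mem_filter, Finset.mem_univ, true_and, Finset.mem_singleton]
  constructor
  · intro hsm
    have h := Finset.orderEmbOfFin_unique hK (f := fun i => ((g i : ℝ)))
      (fun x => (g x).2) hsm
    funext i
    apply Subtype.ext
    rw [show ((g i : ℝ)) = S.orderEmbOfFin hK i from congrFun h i,
      ← Finset.coe_orderIsoOfFin_apply]
  · rintro rfl
    intro a b hab
    exact Subtype.coe_lt_coe.mpr ((S.orderIsoOfFin hK).strictMono hab)

open scoped Classical in
private lemma G_empty {S : Finset ℝ} {M : ℕ} (h : S.card < M) :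
    Finset.univ.filter (fun g : Fin M → S => StrictMono fun i => ((g i : ℝ))) = ∅ := by
  ext g
  simp only [Finset.mem_filter, Finset.mem_univ, true_and, Finset.notMem_empty, iff_false]
  intro hsm
  have hinj : Function.Injective g := fun a b hab => hsm.injective (by rw [hab])
  have hle := Fintype.card_le_of_injective g hinj
  simp only [Fintype.card_coe, Fintype.card_fin] at hle
  omega

private lemma alt_sum (N R : ℕ) (hNR : N ≤ R) :
    ∑ m ∈ Finset.range (R + 1), ((-1 : ℝ) ^ m / (m.factorial : ℝ)) * (N.descFactorial m : ℝ) =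
      if N = 0 then 1 else 0 := by
  have h1 : ∀ m : ℕ, ((-1 : ℝ) ^ m / (m.factorial : ℝ)) * (N.descFactorial m : ℝ) =
      (-1 : ℝ) ^ m * (N.choose m : ℝ) := by
    intro m
    rw [Nat.descFactorial_eq_factorial_mul_choose]
    push_cast
    rw [div_mul_eq_mul_div, mul_comm ((m.factorial : ℝ)), ← mul_assoc, mul_div_assoc,
      div_self (Nat.cast_ne_zero.mpr m.factorial_ne_zero), mul_one]
  simp_rw [h1]
  rw [← Finset.sum_subset
    (Finset.range_subset_range.mpr (by omega) : Finset.range (N + 1) ⊆ Finset.range (R + 1))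
    (by
      intro m hm hnm
      simp only [Finset.mem_range] at hm hnm
      rw [Nat.choose_eq_zero_of_lt (by omega)]
      simp)]
  have h2 := congrArg (fun z : ℤ => (z : ℝ)) (Int.alternating_sum_range_choose (n := N))
  push_cast at h2
  rw [h2]

open scoped Classical in
/-- Finite-set form of the `M`-event compensation scheme: for a finite `S ⊆ ℝ`, `M ≥ 1`,
`f : ℝ^M → ℝ` and `L ≥ max(M, |S|)`, the alternating sum
`∑_{n=M}^{L} ((-1)^{n-M}/(n-M)!) ∑_{t} f (t 0, …, t (M-1))`
(written with `n = M + m`, `m` ranging over `0, …, L-M`), the inner sum being over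
injective tuples `t : Fin n → S` whose first `M` coordinates are strictly increasing,
equals `f` evaluated at the increasing enumeration of `S` if `|S| = M`, and `0`
otherwise. -/
theorem stmt_3 (S : Finset ℝ) (M : ℕ) (hM : 1 ≤ M) (f : (Fin M → ℝ) → ℝ) (L : ℕ)
    (hLM : M ≤ L) (hLS : S.card ≤ L) :
    (∀ hK : S.card = M,
      ∑ m ∈ Finset.range (L - M + 1), ((-1 : ℝ) ^ m / (m.factorial : ℝ)) *
        ∑ t ∈ Finset.univ.filter (fun t : Fin (M + m) → S =>
            Function.Injective t ∧
              StrictMono fun i : Fin M => (t (Fin.castLE (Nat.le_add_right M m) i) : ℝ)),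
          f (fun i => (t (Fin.castLE (Nat.le_add_right M m) i) : ℝ)) =
      f (fun i => (S.orderIsoOfFin hK i : ℝ))) ∧
    (S.card ≠ M →
      ∑ m ∈ Finset.range (L - M + 1), ((-1 : ℝ) ^ m / (m.factorial : ℝ)) *
        ∑ t ∈ Finset.univ.filter (fun t : Fin (M + m) → S =>
            Function.Injective t ∧
              StrictMono fun i : Fin M => (t (Fin.castLE (Nat.le_add_right M m) i) : ℝ)),
          f (fun i => (t (Fin.castLE (Nat.le_add_right M m) i) : ℝ)) = 0) := by
  have key : ∑ m ∈ Finset.range (L - M + 1), ((-1 : ℝ) ^ m / (m.factorial : ℝ)) *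
        ∑ t ∈ Finset.univ.filter (fun t : Fin (M + m) → S =>
            Function.Injective t ∧
              StrictMono fun i : Fin M => (t (Fin.castLE (Nat.le_add_right M m) i) : ℝ)),
          f (fun i => (t (Fin.castLE (Nat.le_add_right M m) i) : ℝ)) =
      (if S.card - M = 0 then (1 : ℝ) else 0) *
        ∑ g ∈ Finset.univ.filter (fun g : Fin M → S => StrictMono fun i => ((g i : ℝ))),
          f (fun i => (g i : ℝ)) := by
    calc _ = ∑ m ∈ Finset.range (L - M + 1), (((-1 : ℝ) ^ m / (m.factorial : ℝ)) *
          ((S.card - M).descFactorial m : ℝ)) *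
          ∑ g ∈ Finset.univ.filter (fun g : Fin M → S => StrictMono fun i => ((g i : ℝ))),
            f (fun i => (g i : ℝ)) := by
          refine Finset.sum_congr rfl fun m _ => ?_
          rw [inner_sum_eq S M m f, mul_assoc]
      _ = _ := by
          rw [← Finset.sum_mul, alt_sum (S.card - M) (L - M) (by omega)]
  constructor
  · intro hK
    rw [key, if_pos (by omega), one_mul, G_eq_singleton hK, Finset.sum_singleton]
  · intro hne
    rcases lt_or_gt_of_ne hne with h | h
    · rw [key, G_empty h, Finset.sum_empty, mul_zero]
    · rw [key, if_neg (by omega), zero_mul]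
end

section
/- Let S be a nonempty finite set of real numbers with K = |S|, for each M ≥ 1 let f_M : ℝ^M → ℝ be any function, and let L be a natural number with L ≥ K. Then the double sum ∑_{M=1}^{L} ∑_{n=M}^{L} ((-1)^{n-M}/(n-M)!) · (∑ over injective tuples t : Fin n → S with t 0 < t 1 < ⋯ < t (M-1) of f_M(t 0,…,t (M-1))) equals f_K(s_1,…,s_K), where s_1 < s_2 < ⋯ < s_K is the increasing enumeration of S. -/
/-!
Fix an injective `M`-tuple in a set of `K` elements. Its extensions to injective
`(M + m)`-tuples are the injective `m`-tuples in the remaining `K - M` elements, so there are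
`(K - M).descFactorial m` of them, and the inner sum is that number times the sum of `f_M` over
the increasing `M`-tuples. Since `(n.descFactorial m) / m! = n.choose m`, summing over `m`
against `(-1)^m / m!` gives `∑ (-1)^m n.choose m`, which vanishes unless `n = K - M = 0`.
For `M > K` there are no increasing `M`-tuples, and for `M = K` the only one is the increasing
enumeration of `S`.
-/

open Finset Function

namespace Fin

variable {α : Type*} {M m : ℕ}

theorem injective_iff_castAdd_natAdd {t : Fin (M + m) → α} :
    Injective t ↔ Injective (fun i => t (castAdd m i)) ∧ Injective (fun j => t (natAdd M j)) ∧
      ∀ i j, t (castAdd m i) ≠ t (natAdd M j) := by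
  conv_lhs => rw [← append_castAdd_natAdd (f := t)]
  exact append_injective_iff

def injectiveExtensionsEquiv (s : Fin M → α) (hs : Injective s) :
    {t : Fin (M + m) → α // Injective t ∧ ∀ i, t (castLE (Nat.le_add_right M m) i) = s i} ≃
      (Fin m ↪ ↥(Set.range s)ᶜ) where
  toFun t :=
    have ht := injective_iff_castAdd_natAdd.mp t.2.1
    ⟨fun j => ⟨t.1 (natAdd M j), fun ⟨i, hi⟩ => ht.2.2 i j ((t.2.2 i).trans hi)⟩,
      fun _ _ h => ht.2.1 (congrArg Subtype.val h)⟩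
  invFun u := ⟨append s (fun j => u j), append_injective_iff.mpr
      ⟨hs, Subtype.val_injective.comp u.injective, fun i j h => (u j).2 ⟨i, h⟩⟩,
    fun i => append_left s _ i⟩
  left_inv t := Subtype.ext <| by
    conv_rhs => rw [← append_castAdd_natAdd (f := t.1)]
    dsimp only
    exact congrArg₂ append (funext fun i => (t.2.2 i).symm) rfl
  right_inv u := by ext j; simp

theorem card_injective_extensions [Fintype α] [DecidableEq α] (s : Fin M → α) (hs : Injective s) :
    #{t : Fin (M + m) → α | Injective t ∧ ∀ i, t (castLE (Nat.le_add_right M m) i) = s i} =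
      (Fintype.card α - M).descFactorial m := by
  rw [← Fintype.card_subtype, Fintype.card_congr (injectiveExtensionsEquiv s hs),
    Fintype.card_embedding_eq, Fintype.card_fin, Fintype.card_compl_set,
    Set.card_range_of_injective hs, Fintype.card_fin]

end Fin

theorem sum_range_neg_one_pow_div_factorial_mul_descFactorial {𝕜 : Type*} [Field 𝕜] [CharZero 𝕜]
    {n R : ℕ} (h : n ≤ R) :
    ∑ m ∈ range (R + 1), (-1 : 𝕜) ^ m / m.factorial * n.descFactorial m =
      if n = 0 then 1 else 0 := by
  rw [← sum_subset (range_subset_range.mpr (by omega : n + 1 ≤ R + 1))]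
  · have h_alt := congrArg (Int.cast : ℤ → 𝕜) (Int.alternating_sum_range_choose (n := n))
    push_cast at h_alt
    rw [← h_alt]
    refine sum_congr rfl fun m _ => ?_
    rw [Nat.descFactorial_eq_factorial_mul_choose]
    have hm : (m.factorial : 𝕜) ≠ 0 := by exact_mod_cast m.factorial_ne_zero
    push_cast
    field_simp
  · intro m _ hm
    rw [mem_range, not_lt] at hm
    simp [Nat.descFactorial_eq_zero_iff_lt.mpr hm]

namespace Finset

theorem sum_injective_of_prefix {α β : Type*} [Fintype α] [AddCommMonoid β] {M m : ℕ}
    (P : (Fin M → α) → Prop) [DecidablePred P]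
    [DecidablePred fun t : Fin (M + m) → α =>
      Injective t ∧ P fun i => t (Fin.castLE (Nat.le_add_right M m) i)]
    (hP : ∀ s, P s → Injective s) (g : (Fin M → α) → β) :
    ∑ t ∈ univ.filter (fun t : Fin (M + m) → α =>
        Injective t ∧ P fun i => t (Fin.castLE (Nat.le_add_right M m) i)),
      g (fun i => t (Fin.castLE (Nat.le_add_right M m) i)) =
    (Fintype.card α - M).descFactorial m • ∑ s ∈ univ.filter P, g s := by
  classical
  rw [← sum_fiberwise_of_maps_to (g := fun t i => t (Fin.castLE (Nat.le_add_right M m) i))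
    (t := univ.filter P) fun t ht => mem_filter.mpr ⟨mem_univ _, (mem_filter.mp ht).2.2⟩, smul_sum]
  refine sum_congr rfl fun s hs => ?_
  rw [mem_filter] at hs
  rw [sum_congr rfl fun t ht => congrArg g (mem_filter.mp ht).2, sum_const]
  congr 1
  rw [← Fin.card_injective_extensions s (hP s hs.2)]
  congr 1
  ext t
  simp only [mem_filter, mem_univ, true_and, funext_iff]
  exact ⟨fun ⟨⟨hinj, _⟩, hpre⟩ => ⟨hinj, hpre⟩,
    fun ⟨hinj, hpre⟩ => ⟨⟨hinj, by rw [funext hpre]; exact hs.2⟩, hpre⟩⟩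

section LinearOrder

variable {α : Type*} [LinearOrder α]

theorem filter_strictMono_coe_eq_empty (S : Finset α) {M : ℕ}
    [DecidablePred fun s : Fin M → S => StrictMono fun i => (s i : α)] (hM : S.card < M) :
    univ.filter (fun s : Fin M → S => StrictMono fun i => (s i : α)) = ∅ := by
  refine filter_eq_empty_iff.mpr fun s _ hs => hM.not_ge ?_
  simpa using Fintype.card_le_of_injective s (Injective.of_comp (f := Subtype.val) hs.injective)

theorem filter_strictMono_coe_eq_singleton (S : Finset α) {K : ℕ}
    [DecidablePred fun s : Fin K → S => StrictMono fun i => (s i : α)] (hK : S.card = K) :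
    univ.filter (fun s : Fin K → S => StrictMono fun i => (s i : α)) =
      {fun i => S.orderIsoOfFin hK i} := by
  ext s
  simp only [mem_filter, mem_univ, true_and, mem_singleton, funext_iff, ← Subtype.coe_inj,
    coe_orderIsoOfFin_apply]
  refine ⟨fun hs => congrFun (orderEmbOfFin_unique hK (fun i => (s i).2) hs), ?_⟩
  intro hs
  rw [show (fun i => (s i : α)) = S.orderEmbOfFin hK from funext hs]
  exact (S.orderEmbOfFin hK).strictMono

theorem sum_injective_of_strictMono_prefix {β : Type*} [AddCommMonoid β] (S : Finset α) {M m : ℕ}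
    [DecidablePred fun s : Fin M → S => StrictMono fun i => (s i : α)]
    [DecidablePred fun t : Fin (M + m) → S =>
      Injective t ∧ StrictMono fun i => (t (Fin.castLE (Nat.le_add_right M m) i) : α)]
    (g : (Fin M → α) → β) :
    ∑ t ∈ univ.filter (fun t : Fin (M + m) → S =>
        Injective t ∧ StrictMono fun i => (t (Fin.castLE (Nat.le_add_right M m) i) : α)),
      g (fun i => t (Fin.castLE (Nat.le_add_right M m) i)) =
    (S.card - M).descFactorial m •
      ∑ s ∈ univ.filter (fun s : Fin M → S => StrictMono fun i => (s i : α)), g fun i => s i := by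
  rw [← Fintype.card_coe S]
  exact sum_injective_of_prefix (fun s : Fin M → S => StrictMono fun i => (s i : α))
    (fun _ hs => Injective.of_comp (f := Subtype.val) hs.injective) (fun s => g fun i => s i)

end LinearOrder

end Finset

open scoped Classical in
/-- Finite-set form of the combined compensation scheme: for a nonempty finite `S ⊆ ℝ`
with `|S| = K`, kernels `f_M : ℝ^M → ℝ` for every `M ≥ 1`, and `L ≥ K`, the double
alternating sum
`∑_{M=1}^{L} ∑_{n=M}^{L} ((-1)^{n-M}/(n-M)!) ∑_{t} f_M (t 0, …, t (M-1))`
(written with `n = M + m`), the innermost sum being over injective tuples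
`t : Fin n → S` whose first `M` coordinates are strictly increasing, equals `f_K`
evaluated at the increasing enumeration `s_1 < ⋯ < s_K` of `S`. -/
theorem stmt_4 (S : Finset ℝ) (hS : S.Nonempty) (K : ℕ) (hK : S.card = K)
    (f : (M : ℕ) → (Fin M → ℝ) → ℝ) (L : ℕ) (hL : K ≤ L) :
    ∑ M ∈ Finset.Icc 1 L, ∑ m ∈ Finset.range (L - M + 1),
      ((-1 : ℝ) ^ m / (m.factorial : ℝ)) *
        ∑ t ∈ Finset.univ.filter (fun t : Fin (M + m) → S =>
            Function.Injective t ∧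
              StrictMono fun i : Fin M => (t (Fin.castLE (Nat.le_add_right M m) i) : ℝ)),
          f M (fun i => (t (Fin.castLE (Nat.le_add_right M m) i) : ℝ)) =
    f K (fun i => (S.orderIsoOfFin hK i : ℝ)) := by
  simp only [sum_injective_of_strictMono_prefix S (f _), hK, nsmul_eq_mul, ← mul_assoc, ← sum_mul]
  rw [sum_eq_single_of_mem K (mem_Icc.mpr ⟨hS.card_pos.trans_eq hK, hL⟩)]
  · rw [Nat.sub_self, sum_range_neg_one_pow_div_factorial_mul_descFactorial (Nat.zero_le _),
      if_pos rfl, one_mul, filter_strictMono_coe_eq_singleton S hK, sum_singleton]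
  · intro M _ hMK
    rcases hMK.lt_or_gt with hlt | hgt
    · rw [sum_range_neg_one_pow_div_factorial_mul_descFactorial (by omega), if_neg (by omega),
        zero_mul]
    · rw [filter_strictMono_coe_eq_empty S (hK.trans_lt hgt), sum_empty, mul_zero]
end

section
/- Let (Ω, 𝒜, P) be a probability space and let τ : Ω → (ℕ → ℝ) be measurable (with respect to the product σ-algebra on ℕ → ℝ) such that for every ω the sequence n ↦ τ(ω)(n) is strictly decreasing, satisfies τ(ω)(0) < 0, and tends to -∞. For s < 0 let 𝓕_s denote the σ-algebra on Ω generated by the map ω ↦ (n ↦ max (τ(ω)(n)) s), i.e. the comap of that map. Then the supremum ⨆_{s < 0} 𝓕_s equals the σ-algebra generated by τ itself, i.e. the comap of τ. -/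
lemma stmt_5_aux_le {α β γ : Type*} [MeasurableSpace β] [MeasurableSpace γ]
    (f : α → β) (g : β → γ) (hg : Measurable g) :
    MeasurableSpace.comap (fun a => g (f a)) inferInstance ≤
      MeasurableSpace.comap f inferInstance := by
  have : (fun a => g (f a)) = g ∘ f := rfl
  rw [this, ← MeasurableSpace.comap_comp]
  exact MeasurableSpace.comap_mono (measurable_iff_comap_le.mp hg)

lemma stmt_5_aux_meas {Ω : Type*} [m : MeasurableSpace Ω] (τ : Ω → ℕ → ℝ)
    (h : ∀ k : ℕ, MeasurableSpace.comap
      (fun ω => fun n => max (τ ω n) (-(k + 1) : ℝ)) inferInstance ≤ m) :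
    Measurable τ := by
  refine measurable_pi_iff.mpr fun n => ?_
  have hg : ∀ k : ℕ, Measurable (fun ω => max (τ ω n) (-(k + 1) : ℝ)) := fun k =>
    (measurable_pi_apply n).comp (measurable_iff_comap_le.mpr (h k))
  have htend' : ∀ ω, Filter.Tendsto (fun k : ℕ => max (τ ω n) (-(k + 1) : ℝ))
      Filter.atTop (nhds (τ ω n)) := by
    intro ω
    refine Filter.Tendsto.congr' ?_ tendsto_const_nhds
    filter_upwards [Filter.eventually_ge_atTop (Nat.ceil (-(τ ω n)))] with k hk
    have : (-(τ ω n)) ≤ (k : ℝ) := le_trans (Nat.le_ceil _) (by exact_mod_cast hk)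
    rw [eq_comm, max_eq_left]
    linarith
  exact measurable_of_tendsto_metrizable hg (tendsto_pi_nhds.mpr htend')

/-- For a point process on `(-∞, 0)` with event times `τ(ω)(0) > τ(ω)(1) > ⋯ → -∞`
enumerated backwards from `0`, the supremum over `s < 0` of the σ-algebras
`𝓕_s = σ(n ↦ τ_n ∨ s)` generated by the events observed in `[s, 0)` equals the
σ-algebra generated by `τ` itself, i.e. `𝓕_{0-} = σ(τ_1, τ_2, …)`. -/
theorem stmt_5 {Ω : Type*} [MeasurableSpace Ω] (P : MeasureTheory.Measure Ω)
    [MeasureTheory.IsProbabilityMeasure P]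
    (τ : Ω → ℕ → ℝ) (hτ : Measurable τ)
    (hanti : ∀ ω, StrictAnti (τ ω)) (h0 : ∀ ω, τ ω 0 < 0)
    (htend : ∀ ω, Filter.Tendsto (τ ω) Filter.atTop Filter.atBot) :
    (⨆ (s : ℝ) (_ : s < 0),
        MeasurableSpace.comap (fun ω => fun n => max (τ ω n) s) inferInstance) =
      MeasurableSpace.comap τ inferInstance := by
  apply le_antisymm
  · refine iSup_le fun s => iSup_le fun hs => ?_
    exact stmt_5_aux_le τ (fun f n => max (f n) s)
      (measurable_pi_iff.mpr fun n => (measurable_pi_apply n).max measurable_const)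
  · refine measurable_iff_comap_le.mp (@stmt_5_aux_meas Ω
      (⨆ (s : ℝ) (_ : s < 0),
        MeasurableSpace.comap (fun ω => fun n => max (τ ω n) s) inferInstance) τ fun k => ?_)
    exact le_iSup₂ (f := fun (s : ℝ) (_ : s < 0) =>
        MeasurableSpace.comap (fun ω => fun n => max (τ ω n) s) inferInstance)
      (-(k + 1) : ℝ) (neg_lt_zero.mpr (by positivity))
end
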